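/- arXiv:2404.16105 — 2 statements merged into one kernel-verified Lean document; each statement's English description precedes it below -/
import Mathlib

section
/- Let $F$ be a valued field of residue characteristic $p > 0$ with rank-1 valuation $v_F$, and let $G \in \mathcal{O}_F[T]$ be monic irreducible of degree $p$ such that $v_F$ extends uniquely to $F(\alpha)$ where $G(\alpha) = 0$ and $v(\alpha) = 0$. If the reduction $\overline{G}$ of $G$ over the residue field is reducible, then $\overline{G} = (T - \overline{\alpha})^p = T^p - \overline{\alpha}^p$ for some element $\overline{\alpha}$ of the residue field; in particular $\overline{G}$ is inseparable. -/
/-!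
Let `q` be an irreducible factor of `Ḡ`, lifted to `H ∈ 𝒪_F[T]`. The polynomials whose reduction
is divisible by `q` form a proper ideal of `𝒪_F[T]` containing `G`, hence the kernel of
`f ↦ f(α)`; so some valuation ring `B` of `L` contains `𝒪_F[α]` and has `H(α)` in its maximal
ideal. `B` lies over the valuation ring of `v_F`, and since `L / F` is algebraic, each `z ∈ L`
has a power `z ^ n` with the same `B`-value as some `y ∈ F`; thus `z ↦ v_F(y) ^ (1 / n)` is a real
valuation extending `v_F` with valuation ring `B`. By uniqueness it is `v_L`, so `H(α)` reduces to
`0`: the residue of `α` is a root of every irreducible factor of `Ḡ`. Coprime factors cannot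
share a root, so `Ḡ = q ^ n`, and as `Ḡ` is reducible of prime degree `p`, `q` is linear and
`n = p`; the Frobenius gives `(T - a) ^ p = T ^ p - a ^ p`.
-/

open scoped NNReal

/-- The reduction `Ḡ` of a polynomial `G` over a valued field, all of whose coefficients lie in
the valuation ring, over the residue field of the valuation. -/
noncomputable def redPoly {F : Type*} [Field F] (v : Valuation F ℝ≥0) (G : Polynomial F)
    (h : ∀ i, G.coeff i ∈ v.valuationSubring) :
    Polynomial (IsLocalRing.ResidueField v.valuationSubring) :=
  ∑ i ∈ G.support,
    Polynomial.C (IsLocalRing.residue v.valuationSubring ⟨G.coeff i, h i⟩) * Polynomial.X ^ i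

open Polynomial IsLocalRing

section RootValue

variable {F L Γ : Type*} [Field F] [Field L] [Algebra F L] [LinearOrderedCommGroupWithZero Γ]

theorem Valuation.exists_ne_map_eq_of_sum_eq_zero {K ι : Type*} [Field K]
    (v : Valuation K Γ) {s : Finset ι} {f : ι → K}
    (hs : s.Nonempty) (hf : ∀ i ∈ s, f i ≠ 0) (hsum : ∑ i ∈ s, f i = 0) :
    ∃ i ∈ s, ∃ j ∈ s, i ≠ j ∧ v (f i) = v (f j) := by
  classical
  obtain ⟨i, hi, hmax⟩ := s.exists_max_image (fun i ↦ v (f i)) hs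
  by_contra! hne
  have hlt : ∀ j ∈ s \ {i}, v (f j) < v (f i) := fun j hj ↦ by
    rw [Finset.mem_sdiff, Finset.mem_singleton] at hj
    exact (hmax j hj.1).lt_of_ne (hne j hj.1 i hi hj.2)
  have := v.map_sum_eq_of_lt hi hlt
  rw [hsum, v.map_zero, eq_comm, v.zero_iff] at this
  exact hf i hi this

/-- Two terms of the minimal polynomial equation of `z` must have equal valuation. -/
theorem Valuation.exists_map_pow_eq_map_algebraMap (w : Valuation L Γ) {z : L}
    (hz : IsIntegral F z) : ∃ n ≠ 0, ∃ y : F, w (z ^ n) = w (algebraMap F L y) := by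
  rcases eq_or_ne z 0 with rfl | hz0
  · exact ⟨1, one_ne_zero, 0, by simp⟩
  set f := minpoly F z
  have hterm : ∀ i ∈ f.support, algebraMap F L (f.coeff i) * z ^ i ≠ 0 := fun i hi ↦
    mul_ne_zero (by simpa using hi) (pow_ne_zero _ hz0)
  have hsum : ∑ i ∈ f.support, algebraMap F L (f.coeff i) * z ^ i = 0 := by
    rw [← minpoly.aeval F z, aeval_def, eval₂_eq_sum, sum_def]
  obtain ⟨i, hi, j, hj, hij, hv⟩ := w.exists_ne_map_eq_of_sum_eq_zero
    (support_nonempty.mpr (minpoly.ne_zero hz)) hterm hsum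
  wlog hji : j < i generalizing i j
  · exact this j hj i hi hij.symm hv.symm (hij.lt_or_gt.resolve_right hji)
  have hci : w (algebraMap F L (f.coeff i)) ≠ 0 := by simpa using hi
  refine ⟨i - j, Nat.sub_ne_zero_of_lt hji, f.coeff j / f.coeff i, ?_⟩
  rw [map_pow, pow_sub₀ _ (by simpa using hz0) hji.le, ← div_eq_mul_inv, map_div₀, map_div₀,
    div_eq_div_iff (pow_ne_zero _ (by simpa using hz0)) hci]
  simpa only [map_mul, map_pow, mul_comm] using hv

open Classical in
/-- `z ↦ vF y ^ (1 / n)` for a choice of `n ≠ 0` and `y ∈ F` with `w (z ^ n) = w y`. -/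
noncomputable def rootValue (vF : Valuation F ℝ≥0) (w : Valuation L Γ) (z : L) : ℝ≥0 :=
  if h : ∃ ny : ℕ × F, ny.1 ≠ 0 ∧ w (z ^ ny.1) = w (algebraMap F L ny.2) then
    vF h.choose.2 ^ (h.choose.1 : ℝ)⁻¹
  else 0

variable {vF : Valuation F ℝ≥0} {w : Valuation L Γ}

theorem rootValue_pow_eq (hw : (w.comap (algebraMap F L)).IsEquiv vF) {z : L} {n : ℕ}
    (hn : n ≠ 0) {y : F} (hy : w (z ^ n) = w (algebraMap F L y)) :
    rootValue vF w z ^ n = vF y := by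
  have h : ∃ ny : ℕ × F, ny.1 ≠ 0 ∧ w (z ^ ny.1) = w (algebraMap F L ny.2) := ⟨(n, y), hn, hy⟩
  obtain ⟨hm, hy'⟩ := h.choose_spec
  set m := h.choose.1
  set y' := h.choose.2
  have hyy' : vF y' ^ n = vF y ^ m := by
    simp only [← map_pow]
    rw [← hw.eq_iff, Valuation.comap_apply, Valuation.comap_apply, map_pow, map_pow, map_pow,
      map_pow, ← hy, ← hy', ← map_pow, ← map_pow, ← pow_mul, ← pow_mul, mul_comm]
  rw [rootValue, dif_pos h, ← NNReal.rpow_natCast, ← NNReal.rpow_mul, mul_comm,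
    NNReal.rpow_mul, NNReal.rpow_natCast, hyy', NNReal.pow_rpow_inv_natCast _ hm]

variable [Algebra.IsIntegral F L]

theorem rootValue_le_rootValue_iff (hw : (w.comap (algebraMap F L)).IsEquiv vF) (z₁ z₂ : L) :
    rootValue vF w z₁ ≤ rootValue vF w z₂ ↔ w z₁ ≤ w z₂ := by
  obtain ⟨n₁, hn₁, y₁, hy₁⟩ :=
    w.exists_map_pow_eq_map_algebraMap (Algebra.IsIntegral.isIntegral (R := F) z₁)
  obtain ⟨n₂, hn₂, y₂, hy₂⟩ :=
    w.exists_map_pow_eq_map_algebraMap (Algebra.IsIntegral.isIntegral (R := F) z₂)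
  have hn : n₁ * n₂ ≠ 0 := mul_ne_zero hn₁ hn₂
  have e₁ : rootValue vF w z₁ ^ (n₁ * n₂) = vF (y₁ ^ n₂) := by
    rw [pow_mul, rootValue_pow_eq hw hn₁ hy₁, map_pow]
  have e₂ : rootValue vF w z₂ ^ (n₁ * n₂) = vF (y₂ ^ n₁) := by
    rw [mul_comm, pow_mul, rootValue_pow_eq hw hn₂ hy₂, map_pow]
  have f₁ : w z₁ ^ (n₁ * n₂) = w (algebraMap F L (y₁ ^ n₂)) := by
    rw [pow_mul, ← map_pow, hy₁, map_pow, map_pow]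
  have f₂ : w z₂ ^ (n₁ * n₂) = w (algebraMap F L (y₂ ^ n₁)) := by
    rw [mul_comm, pow_mul, ← map_pow, hy₂, map_pow, map_pow]
  rw [← pow_le_pow_iff_left₀ zero_le zero_le hn, e₁, e₂,
    ← pow_le_pow_iff_left₀ (a := w z₁) zero_le zero_le hn, f₁, f₂]
  exact hw.le_iff_le.symm

noncomputable def rootValuation (hw : (w.comap (algebraMap F L)).IsEquiv vF) :
    Valuation L ℝ≥0 where
  toFun := rootValue vF w
  map_zero' := by simpa using rootValue_pow_eq hw one_ne_zero (z := 0) (y := 0) (by simp)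
  map_one' := by simpa using rootValue_pow_eq hw one_ne_zero (z := 1) (y := 1) (by simp)
  map_mul' z₁ z₂ := by
    obtain ⟨n₁, hn₁, y₁, hy₁⟩ :=
      w.exists_map_pow_eq_map_algebraMap (Algebra.IsIntegral.isIntegral (R := F) z₁)
    obtain ⟨n₂, hn₂, y₂, hy₂⟩ :=
      w.exists_map_pow_eq_map_algebraMap (Algebra.IsIntegral.isIntegral (R := F) z₂)
    have hn : n₁ * n₂ ≠ 0 := mul_ne_zero hn₁ hn₂
    have hy : w ((z₁ * z₂) ^ (n₁ * n₂)) = w (algebraMap F L (y₁ ^ n₂ * y₂ ^ n₁)) := by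
      rw [map_pow] at hy₁ hy₂
      simp only [map_mul, map_pow, mul_pow, ← hy₁, ← hy₂, ← pow_mul, mul_comm n₂]
    refine (pow_left_inj₀ zero_le zero_le hn).mp ?_
    rw [rootValue_pow_eq hw hn hy, mul_pow, pow_mul, rootValue_pow_eq hw hn₁ hy₁, mul_comm n₁,
      pow_mul, rootValue_pow_eq hw hn₂ hy₂, map_mul, map_pow, map_pow]
  map_add_le_max' z₁ z₂ := by
    rcases le_max_iff.mp (w.map_add z₁ z₂) with h | h
    · exact le_max_of_le_left ((rootValue_le_rootValue_iff hw _ _).mpr h)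
    · exact le_max_of_le_right ((rootValue_le_rootValue_iff hw _ _).mpr h)

theorem rootValuation_algebraMap (hw : (w.comap (algebraMap F L)).IsEquiv vF) (x : F) :
    rootValuation hw (algebraMap F L x) = vF x :=
  (pow_one _).symm.trans (rootValue_pow_eq hw one_ne_zero (by rw [pow_one]))

theorem rootValuation_isEquiv (hw : (w.comap (algebraMap F L)).IsEquiv vF) :
    (rootValuation hw).IsEquiv w :=
  rootValue_le_rootValue_iff hw

end RootValue

theorem exists_valuationSubring_map_mem_nonunits {A K : Type*} [CommRing A] [Field K]
    (ψ : A →+* K) {I : Ideal A} (hI : I ≠ ⊤) (hker : RingHom.ker ψ ≤ I) :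
    ∃ B : ValuationSubring K, (∀ a, ψ a ∈ B) ∧ ∀ a ∈ I, ψ a ∈ B.nonunits := by
  have hJ : I.map ψ.rangeRestrict ≠ ⊤ := fun h ↦ hI <| by
    rw [← sup_eq_left.mpr hker, ← ψ.ker_rangeRestrict,
      ← Ideal.comap_map_of_surjective' _ ψ.rangeRestrict_surjective, h, Ideal.comap_top]
  obtain ⟨B, hAB, hB⟩ := Ideal.image_subset_nonunits_valuationSubring _ hJ
  exact ⟨B, fun a ↦ hAB ⟨a, rfl⟩,
    fun a ha ↦ hB ⟨ψ.rangeRestrict a, Ideal.mem_map_of_mem _ ha, rfl⟩⟩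

theorem ValuationSubring.isEquiv_comap_valuation {F L Γ : Type*} [Field F] [Field L]
    [Algebra F L] [LinearOrderedCommGroupWithZero Γ] {v : Valuation F Γ} {B : ValuationSubring L}
    (hle : ∀ x, v x ≤ 1 → algebraMap F L x ∈ B)
    (hlt : ∀ x, v x < 1 → algebraMap F L x ∈ B.nonunits) :
    (B.valuation.comap (algebraMap F L)).IsEquiv v := by
  refine Valuation.isEquiv_of_val_le_one fun x ↦ ?_
  rw [Valuation.comap_apply, ValuationSubring.valuation_le_one_iff]
  refine ⟨fun hx ↦ ?_, hle x⟩
  by_contra! h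
  have := hlt x⁻¹ (by rw [map_inv₀]; exact inv_lt_one_of_one_lt₀ h)
  rw [map_inv₀, ValuationSubring.inv_mem_nonunits_iff] at this
  rcases this with hx0 | hx'
  · simp only [map_eq_zero] at hx0
    simp [hx0] at h
  · exact hx' hx

theorem Valuation.residue_eq_zero_iff {K Γ : Type*} [Field K]
    [LinearOrderedCommGroupWithZero Γ] (v : Valuation K Γ) (x : v.valuationSubring) :
    residue _ x = 0 ↔ v x < 1 := by
  rw [IsLocalRing.residue_eq_zero_iff, ValuationSubring.valuation_lt_one_iff,
    (v.isEquiv_valuation_valuationSubring).lt_one_iff_lt_one]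

open UniqueFactorizationMonoid in
theorem Polynomial.exists_eq_pow_of_forall_dvd_ringHom_eq_zero {k K : Type*} [Field k]
    [CommRing K] [Nontrivial K] {f : k[X]} (hf : f.Monic) (hfu : ¬IsUnit f) (ev : k[X] →+* K)
    (hev : ∀ q, Irreducible q → q ∣ f → ev q = 0) :
    ∃ q : k[X], q.Monic ∧ Irreducible q ∧ ∃ n, f = q ^ n := by
  classical
  obtain ⟨q, hq⟩ := exists_mem_normalizedFactors hf.ne_zero hfu
  have hqirr := irreducible_of_normalized_factor q hq
  have huniq {r} (hr : r ∈ normalizedFactors f) : r = q := by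
    have hrirr := irreducible_of_normalized_factor r hr
    have hrq : r ∣ q := by
      by_contra hrq
      have := ((hrirr.coprime_iff_not_dvd).mpr hrq).map ev
      rw [hev r hrirr (dvd_of_mem_normalizedFactors hr),
        hev q hqirr (dvd_of_mem_normalizedFactors hq), isCoprime_zero_left] at this
      exact not_isUnit_zero this
    exact (hrirr.associated_of_dvd hqirr hrq).eq_of_normalized
      (normalize_normalized_factor r hr) (normalize_normalized_factor q hq)
  have hqm : q.Monic := normalize_normalized_factor q hq ▸ monic_normalize hqirr.ne_zero
  obtain ⟨n, hn⟩ := exists_associated_prime_pow_of_unique_normalized_factor huniq hf.ne_zero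
  exact ⟨q, hqm, hqirr, n, (eq_of_monic_of_associated (hqm.pow n) hf hn).symm⟩

theorem Polynomial.exists_eq_X_sub_C_pow_of_eq_pow {k : Type*} [Field k] {f q : k[X]} {n p : ℕ}
    (hp : p.Prime) (hdeg : f.natDegree = p) (hf : ¬Irreducible f) (hqm : q.Monic)
    (hq : Irreducible q) (hfq : f = q ^ n) : ∃ a, f = (X - C a) ^ p := by
  rw [hfq, hqm.natDegree_pow] at hdeg
  rcases Nat.prime_mul_iff.mp (hdeg ▸ hp) with ⟨-, hq1⟩ | ⟨-, hn1⟩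
  · refine ⟨-q.coeff 0, ?_⟩
    rw [hfq, map_neg, sub_neg_eq_add, ← hqm.eq_X_add_C hq1, ← hdeg, hq1, mul_one]
  · rw [hfq, hn1, pow_one] at hf
    exact absurd hq hf

theorem coeff_redPoly {F : Type*} [Field F] (v : Valuation F ℝ≥0) (G : F[X])
    (h : ∀ i, G.coeff i ∈ v.valuationSubring) (n : ℕ) :
    (redPoly v G h).coeff n = residue _ ⟨G.coeff n, h n⟩ := by
  classical
  simp only [redPoly, finsetSum_coeff, coeff_C_mul_X_pow, Finset.sum_ite_eq, mem_support_iff]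
  split_ifs with hn
  · rfl
  · rw [eq_comm, ← map_zero (residue v.valuationSubring)]
    exact congrArg _ (Subtype.ext (not_not.mp hn))

theorem redPoly_eq_map {F : Type*} [Field F] (v : Valuation F ℝ≥0) {G : F[X]}
    (h : ∀ i, G.coeff i ∈ v.valuationSubring) {G' : v.valuationSubring[X]}
    (hG' : G'.map (algebraMap _ F) = G) : redPoly v G h = G'.map (residue _) := by
  ext n
  rw [coeff_redPoly, coeff_map]
  congr 1
  refine Subtype.ext (?_ : G.coeff n = G'.coeff n)
  rw [← hG', coeff_map]
  rfl

section Reduction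

variable {F L : Type*} [Field F] [Field L] [Algebra F L] {vF : Valuation F ℝ≥0}
  {vL : Valuation L ℝ≥0} [vF.HasExtension vL]

theorem residue_aeval_eq_aeval_map (a : vL.valuationSubring) (f : vF.valuationSubring[X]) :
    residue _ (aeval a f) = aeval (residue _ a) (f.map (residue vF.valuationSubring)) := by
  rw [← ResidueField.algebraMap_eq, ← ResidueField.algebraMap_eq, aeval_map_algebraMap,
    aeval_algebraMap_apply]

theorem dvd_of_aeval_eq_zero {α : L} {G : vF.valuationSubring[X]} (hG : G.Monic)
    (hGα : G.map (algebraMap _ F) = minpoly F α) {f : vF.valuationSubring[X]}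
    (hf : aeval α f = 0) : G ∣ f :=
  (map_dvd_map _ Subtype.val_injective hG).mp <|
    hGα ▸ minpoly.dvd F α (by rwa [aeval_map_algebraMap])

theorem aeval_residue_eq_zero_of_dvd [Algebra.IsIntegral F L]
    (huniq : ∀ u : Valuation L ℝ≥0, (∀ x : F, u (algebraMap F L x) = vF x) → u = vL)
    {α : vL.valuationSubring} {G : vF.valuationSubring[X]} (hG : G.Monic)
    (hGα : G.map (algebraMap _ F) = minpoly F (α : L))
    {q : (ResidueField vF.valuationSubring)[X]} (hq : q ∣ G.map (residue _))
    (hqu : ¬IsUnit q) : aeval (residue _ α) q = 0 := by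
  obtain ⟨H, rfl⟩ := map_surjective _ residue_surjective q
  let I := (Ideal.span {H.map (residue _)}).comap (mapRingHom (residue vF.valuationSubring))
  have hI : I ≠ ⊤ := by
    rwa [Ne, Ideal.comap_eq_top_iff, Ideal.span_singleton_eq_top]
  have hker : RingHom.ker (aeval (α : L)).toRingHom ≤ I := fun f hf ↦
    Ideal.mem_span_singleton.mpr <| hq.trans <| Polynomial.map_dvd _ <|
      dvd_of_aeval_eq_zero hG hGα (RingHom.mem_ker.mp hf)
  obtain ⟨B, hB, hBI⟩ := exists_valuationSubring_map_mem_nonunits _ hI hker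
  have hBF : (B.valuation.comap (algebraMap F L)).IsEquiv vF := by
    refine ValuationSubring.isEquiv_comap_valuation (fun x hx ↦ ?_) (fun x hx ↦ ?_)
    · simpa [IsScalarTower.algebraMap_apply _ F L] using hB (C ⟨x, hx⟩)
    · have hCI : C ⟨x, hx.le⟩ ∈ I := by simp [I, (vF.residue_eq_zero_iff ⟨x, hx.le⟩).mpr hx]
      simpa [IsScalarTower.algebraMap_apply _ F L] using hBI _ hCI
  have hvL : vL.IsEquiv B.valuation :=
    huniq _ (rootValuation_algebraMap hBF) ▸ rootValuation_isEquiv hBF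
  rw [← residue_aeval_eq_aeval_map, vL.residue_eq_zero_iff,
    show (aeval α H : L) = aeval (α : L) H from (aeval_algebraMap_apply L α H).symm,
    hvL.lt_one_iff_lt_one,
    ← ValuationSubring.mem_nonunits_iff]
  exact hBI H (Ideal.mem_span_singleton_self _)

end Reduction

/-- Let `F` be a valued field of residue characteristic `p > 0` with rank-1 valuation `v_F`
(written multiplicatively), and let `G ∈ 𝒪_F[T]` be monic irreducible of degree `p` such that
`v_F` extends uniquely to `F(α)`, where `G(α) = 0` and `v(α) = 0` (multiplicatively `= 1`).
If the reduction `Ḡ` of `G` over the residue field is reducible, then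
`Ḡ = (T - ᾱ)^p = T^p - ᾱ^p` for some element `ᾱ` of the residue field; in particular `Ḡ` is
inseparable. -/
theorem stmt6 {F : Type*} [Field F] (p : ℕ) (hp : p.Prime)
    (vF : Valuation F ℝ≥0)
    [CharP (IsLocalRing.ResidueField vF.valuationSubring) p]
    (G : Polynomial F) (hGmonic : G.Monic) (hGirr : Irreducible G) (hGdeg : G.natDegree = p)
    (hcoeff : ∀ i, G.coeff i ∈ vF.valuationSubring)
    (L : Type*) [Field L] [Algebra F L]
    (α : L) (hαgen : Algebra.adjoin F {α} = ⊤) (hαroot : Polynomial.aeval α G = 0)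
    (vL : Valuation L ℝ≥0)
    (hext : ∀ x : F, vL (algebraMap F L x) = vF x)
    (huniq : ∀ u : Valuation L ℝ≥0, (∀ x : F, u (algebraMap F L x) = vF x) → u = vL)
    (hvα : vL α = 1)
    (hred : ¬ Irreducible (redPoly vF G hcoeff)) :
    ∃ a : IsLocalRing.ResidueField vF.valuationSubring,
      redPoly vF G hcoeff = (Polynomial.X - Polynomial.C a) ^ p ∧
      redPoly vF G hcoeff = Polynomial.X ^ p - Polynomial.C (a ^ p) ∧
      ¬ (redPoly vF G hcoeff).Separable := by
  have : vF.HasExtension vL := ⟨.of_eq (Valuation.ext fun x ↦ (hext x).symm)⟩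
  have : Algebra.IsIntegral F L :=
    ⟨fun z ↦ adjoin_le_integralClosure ⟨G, hGmonic, hαroot⟩ (hαgen ▸ Algebra.mem_top)⟩
  obtain ⟨G', hG'G, hG'deg, hG'⟩ := lifts_and_natDegree_eq_and_monic
    ((lifts_iff_coeff_lifts (f := algebraMap vF.valuationSubring F) G).mpr
      fun n ↦ ⟨⟨_, hcoeff n⟩, rfl⟩) hGmonic
  have hGbar : redPoly vF G hcoeff = G'.map (residue _) := redPoly_eq_map vF hcoeff hG'G
  have hdeg : (redPoly vF G hcoeff).natDegree = p := by
    rw [hGbar, hG'.natDegree_map, hG'deg, hGdeg]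
  have hroot (q) (hq : Irreducible q) (hqG : q ∣ redPoly vF G hcoeff) :
      aeval (residue _ (⟨α, hvα.le⟩ : vL.valuationSubring)) q = 0 :=
    aeval_residue_eq_zero_of_dvd huniq hG'
      (by rw [hG'G, minpoly.eq_of_irreducible_of_monic hGirr hαroot hGmonic]) (hGbar ▸ hqG)
      hq.not_isUnit
  obtain ⟨q, hqm, hq, n, hGq⟩ := exists_eq_pow_of_forall_dvd_ringHom_eq_zero (hGbar ▸ hG'.map _)
    (fun hu ↦ hp.ne_zero (hdeg ▸ natDegree_eq_zero_of_isUnit hu)) (aeval _).toRingHom hroot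
  obtain ⟨a, ha⟩ := exists_eq_X_sub_C_pow_of_eq_pow hp hdeg hred hqm hq hGq
  have : Fact p.Prime := ⟨hp⟩
  refine ⟨a, ha, by rw [ha, sub_pow_char, C_pow], fun hsep ↦ ?_⟩
  rw [ha] at hsep
  exact hp.one_lt.ne' (hsep.of_pow (not_isUnit_X_sub_C a) hp.ne_zero).2
end

section
/- Let $k$ be an algebraically closed field of characteristic 3, and let $A, B, C \in k[x]$ be polynomials with $\deg A \leq 2$, $\deg B \leq 3$, $\deg C \leq 4$, such that $f = y^3 + A y^2 + B y + C$ is irreducible over $k(x)$. If the discriminant $\Delta_f = A^2B^2 - B^3 - A^3 C$ lies in $k^\times$ (i.e. is a nonzero constant), then $A = 0$ and $B$ is a nonzero constant in $k$. -/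
open Polynomial

/-- Let `k` be an algebraically closed field of characteristic 3, and let `A, B, C ∈ k[x]` be
polynomials with `deg A ≤ 2`, `deg B ≤ 3`, `deg C ≤ 4`, such that
`f = y³ + A y² + B y + C` is irreducible over `k(x)`.  If the discriminant
`Δ_f = A² B² - B³ - A³ C` is a nonzero constant (i.e. a unit of `k[x]`), then `A = 0`
and `B` is a nonzero constant in `k`. -/
theorem stmt8 {k : Type*} [Field k] [IsAlgClosed k] [CharP k 3]
    (A B C : Polynomial k)
    (hA : A.natDegree ≤ 2) (hB : B.natDegree ≤ 3) (hC : C.natDegree ≤ 4)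
    (f : Polynomial (RatFunc k))
    (hf : f = Polynomial.X ^ 3
        + Polynomial.C (algebraMap (Polynomial k) (RatFunc k) A) * Polynomial.X ^ 2
        + Polynomial.C (algebraMap (Polynomial k) (RatFunc k) B) * Polynomial.X
        + Polynomial.C (algebraMap (Polynomial k) (RatFunc k) C))
    (hirr : Irreducible f)
    (hΔ : IsUnit (A ^ 2 * B ^ 2 - B ^ 3 - A ^ 3 * C)) :
    A = 0 ∧ ∃ b : k, b ≠ 0 ∧ B = Polynomial.C b := by
  classical
  obtain ⟨u, hu, hDu⟩ := Polynomial.isUnit_iff.mp hΔ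
  have hu0 : u ≠ 0 := hu.ne_zero
  have h3p : (3 : Polynomial k) = 0 := CharP.cast_eq_zero (Polynomial k) 3
  set φ := algebraMap (Polynomial k) (RatFunc k) with hφ
  set ψ := φ.comp (Polynomial.C : k →+* Polynomial k) with hψ
  have h3K : (3 : RatFunc k) = 0 := by
    rw [← map_ofNat φ 3, h3p, map_zero]
  -- Step 1 : A = 0
  have hA0eq : A = 0 := by
    by_contra hA0
    -- derivative of the discriminant is zero
    have hder0 : derivative (A ^ 2 * B ^ 2 - B ^ 3 - A ^ 3 * C) = 0 := by
      rw [← hDu]; exact derivative_C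
    simp only [derivative_sub, derivative_mul, derivative_pow, map_ofNat, Nat.cast_ofNat,
      derivative_C] at hder0
    -- A, B have no common roots, hence coprime
    have hcop : IsCoprime A B := by
      rw [← EuclideanDomain.gcd_isUnit_iff]
      by_contra hg
      have hgne : EuclideanDomain.gcd A B ≠ 0 := fun h => hA0 (EuclideanDomain.gcd_eq_zero_iff.mp h).1
      have hdeg : (EuclideanDomain.gcd A B).degree ≠ 0 := fun h =>
        hg (Polynomial.isUnit_iff_degree_eq_zero.mpr h)
      obtain ⟨a, ha⟩ := IsAlgClosed.exists_root _ hdeg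
      have hAa : A.eval a = 0 :=
        eval_eq_zero_of_dvd_of_eval_eq_zero (EuclideanDomain.gcd_dvd_left A B) ha
      have hBa : B.eval a = 0 :=
        eval_eq_zero_of_dvd_of_eval_eq_zero (EuclideanDomain.gcd_dvd_right A B) ha
      have : (A ^ 2 * B ^ 2 - B ^ 3 - A ^ 3 * C).eval a = 0 := by
        simp [hAa, hBa]
      rw [← hDu] at this
      simp only [eval_C] at this
      exact hu0 this
    -- extract the key cancellation
    have key : A * (2 * derivative A * B ^ 2 + 2 * A * B * derivative B
        - A ^ 2 * derivative C) = 0 := by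
      linear_combination hder0 + (B ^ 2 * derivative B + A ^ 2 * derivative A * C) * h3p
    have hquo : 2 * derivative A * B ^ 2 + 2 * A * B * derivative B - A ^ 2 * derivative C = 0 :=
      (mul_eq_zero.mp key).resolve_left hA0
    have hdvdAB : derivative A * B ^ 2 = A * (2 * (A * derivative C - 2 * B * derivative B)) := by
      linear_combination 2 * hquo - derivative A * B ^ 2 * h3p
    have hdvd' : A ∣ derivative A := (hcop.pow_right).dvd_of_dvd_mul_right ⟨_, hdvdAB⟩
    -- A is a nonzero constant
    have hn0 : A.natDegree = 0 := by
      by_contra hn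
      have hA' : derivative A ≠ 0 := by
        intro h0
        have hc := Polynomial.coeff_derivative A (A.natDegree - 1)
        rw [h0] at hc
        have hnn : A.natDegree - 1 + 1 = A.natDegree := by omega
        rw [hnn] at hc
        have hlc : A.coeff A.natDegree ≠ 0 := by
          exact Polynomial.leadingCoeff_ne_zero.mpr hA0
        have hcast : ((A.natDegree - 1 : ℕ) : k) + 1 = 0 := by
          rcases mul_eq_zero.mp hc.symm with h | h
          · exact absurd h hlc
          · exact h
        set n := A.natDegree with hnd
        have h1 : 1 ≤ n := Nat.one_le_iff_ne_zero.mpr hn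
        interval_cases n
        · rw [show ((1:ℕ) - 1 : ℕ) = 0 from rfl, Nat.cast_zero, zero_add] at hcast
          exact one_ne_zero hcast
        · rw [show ((2 : ℕ) - 1 : ℕ) = 1 by rfl] at hcast
          have h2 : ((1 : ℕ) : k) + 1 = (2 : k) := by norm_num
          rw [h2] at hcast
          have : (3 : k) = 0 := CharP.cast_eq_zero k 3
          have : (1 : k) = 0 := by linear_combination this - hcast
          exact one_ne_zero this
      have h1 : A.natDegree ≤ (derivative A).natDegree :=
        Polynomial.natDegree_le_of_dvd hdvd' hA'
      have h2 := Polynomial.natDegree_derivative_lt hn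
      omega
    obtain ⟨α, hAC⟩ := Polynomial.natDegree_eq_zero.mp hn0
    have hα : α ≠ 0 := fun h => hA0 (by rw [← hAC, h, map_zero])
    -- find a root r of α³X³ + α⁴X² − u in k
    have hα3 : α ^ 3 ≠ 0 := pow_ne_zero _ hα
    have hqdeg : (Polynomial.C (α ^ 3) * X ^ 3 + Polynomial.C (α ^ 4) * X ^ 2
        - Polynomial.C u : Polynomial k).degree ≠ 0 := by
      have : (Polynomial.C (α ^ 3) * X ^ 3 + Polynomial.C (α ^ 4) * X ^ 2
          - Polynomial.C u : Polynomial k).degree = 3 := by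
        compute_degree!
      rw [this]; norm_num
    obtain ⟨r, hr⟩ := IsAlgClosed.exists_root _ hqdeg
    have hrk : α ^ 3 * r ^ 3 + α ^ 4 * r ^ 2 - u = 0 := by
      simpa [Polynomial.IsRoot] using hr
    -- map everything to K = RatFunc k
    have hψinj : Function.Injective ψ := ψ.injective
    have hψα : ψ α ≠ 0 := fun h => hα (hψinj (by simpa using h))
    have hr' : ψ α ^ 3 * ψ r ^ 3 + ψ α ^ 4 * ψ r ^ 2 = ψ u := by
      have := congrArg ψ hrk
      simp only [map_add, map_sub, map_mul, map_pow, map_zero] at this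
      linear_combination this
    have hψαC : φ (Polynomial.C α) = ψ α := rfl
    have hd' : ψ α ^ 2 * φ B ^ 2 - φ B ^ 3 - ψ α ^ 3 * φ C = ψ u := by
      have h := congrArg φ hDu
      rw [← hAC] at h
      simp only [map_add, map_sub, map_mul, map_pow] at h
      rw [hψαC] at h
      have hψuC : φ (Polynomial.C u) = ψ u := rfl
      rw [hψuC] at h
      linear_combination -h
    set β : RatFunc k := ψ α⁻¹ * φ B with hβ
    have hb : φ B = ψ α * β := by
      rw [hβ, ← mul_assoc, ← map_mul, mul_inv_cancel₀ hα, map_one, one_mul]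
    set y₀ : RatFunc k := ψ r + β with hy₀
    have hroot : Polynomial.eval y₀ f = 0 := by
      rw [hf]
      simp only [eval_add, eval_mul, eval_pow, eval_C, eval_X]
      rw [← hAC, hψαC]
      have hd'' : ψ α ^ 4 * β ^ 2 - ψ α ^ 3 * β ^ 3 - ψ α ^ 3 * φ C = ψ u := by
        rw [hb] at hd'
        linear_combination hd'
      have hsuff : ψ α ^ 3 * (y₀ ^ 3 + ψ α * y₀ ^ 2 + φ B * y₀ + φ C) = 0 := by
        rw [hb, hy₀]
        linear_combination hr' - hd'' + ((ψ α) ^ 4 * β ^ 2 + (ψ α) ^ 3 * (ψ r) ^ 2 * β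
          + (ψ α) ^ 3 * (ψ r) * β ^ 2 + (ψ α) ^ 4 * (ψ r) * β) * h3K
      have := mul_eq_zero.mp hsuff
      rcases this with h | h
      · exact absurd h (pow_ne_zero _ hψα)
      · exact h
    have hdvdf : (X - Polynomial.C y₀) ∣ f := dvd_iff_isRoot.mpr hroot
    obtain ⟨g, hg⟩ := hdvdf
    rcases hirr.isUnit_or_isUnit hg with h | h
    · exact Polynomial.not_isUnit_X_sub_C y₀ h
    · have hdegf : f.natDegree = 3 := by
        rw [hf]; compute_degree!
      have hgC : g.degree = 0 := Polynomial.isUnit_iff_degree_eq_zero.mp h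
      have hg0 : g ≠ 0 := h.ne_zero
      have : f.natDegree = 1 := by
        rw [hg, Polynomial.natDegree_mul (Polynomial.X_sub_C_ne_zero y₀) hg0,
          Polynomial.natDegree_X_sub_C, Polynomial.natDegree_eq_zero_iff_degree_le_zero.mpr hgC.le]
      omega
  refine ⟨hA0eq, ?_⟩
  rw [hA0eq] at hΔ
  have hB3 : IsUnit (B ^ 3) := by
    have : IsUnit (-(B ^ 3)) := by simpa using hΔ
    simpa using this.neg
  have hBu : IsUnit B := (isUnit_pow_iff (by norm_num)).mp hB3
  obtain ⟨b, hb, hbC⟩ := Polynomial.isUnit_iff.mp hBu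
  exact ⟨b, hb.ne_zero, hbC.symm⟩
end
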